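/- Let Θ be an antisymmetric real n×n matrix. For a smooth map B : ℝ^n → ℝ^n define the covariant field strength F^s(B)_{ab}(x) = ∂B_b/∂x^a − ∂B_a/∂x^b + Σ_{i,j} Θ^{ij} ∂B_i/∂x^a · ∂B_j/∂x^b. Let A, Λ : ℝ^n → ℝ^n be smooth with F^s(Λ) = 0 identically (Λ is Lagrangian), set l(x) = x + ΘΛ(x) and A'(x) = Λ(x) + A(l(x)). Then F^s transforms covariantly: for all x and all a,b, F^s(A')_{ab}(x) = Σ_{c,d} (∂l^c/∂x^a)(x) · (∂l^d/∂x^b)(x) · F^s(A)_{cd}(l(x)). -/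

import Mathlib

open scoped BigOperators

/-- partial derivative `∂/∂x^a` of a scalar function on `ℝ^n`. -/
noncomputable def pdb {n : ℕ} (a : Fin n) (h : (Fin n → ℝ) → ℝ) (x : Fin n → ℝ) : ℝ :=
  fderiv ℝ h x (Pi.single a 1)

/-- the covariant field strength
`F^s(B)_{ab} = ∂_a B_b − ∂_b B_a + Σ_{i,j} Θ^{ij} ∂_a B_i ∂_b B_j`. -/
noncomputable def Fs {n : ℕ} (Θ : Matrix (Fin n) (Fin n) ℝ)
    (B : (Fin n → ℝ) → (Fin n → ℝ)) (a b : Fin n) (x : Fin n → ℝ) : ℝ :=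
  pdb a (fun x => B x b) x - pdb b (fun x => B x a) x +
    ∑ i, ∑ j, Θ i j * pdb a (fun x => B x i) x * pdb b (fun x => B x j) x



lemma clm_apply_eq_sum {n : ℕ} (w : Fin n → ℝ) (L : (Fin n → ℝ) →L[ℝ] ℝ) :
    L w = ∑ c, w c * L (Pi.single c 1) := by
  conv_lhs => rw [pi_eq_sum_univ w]
  rw [map_sum]
  refine Finset.sum_congr rfl fun c _ => ?_
  rw [map_smul, smul_eq_mul]
  have h : (fun j => if c = j then (1:ℝ) else 0) = Pi.single c 1 := by
    ext j; simp [Pi.single_apply, eq_comm]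
  rw [h]

lemma pdb_add {n : ℕ} (a : Fin n) (f g : (Fin n → ℝ) → ℝ) (x : Fin n → ℝ)
    (hf : DifferentiableAt ℝ f x) (hg : DifferentiableAt ℝ g x) :
    pdb a (fun y => f y + g y) x = pdb a f x + pdb a g x := by
  unfold pdb; rw [fderiv_fun_add hf hg]; rfl

lemma pdb_coord {n : ℕ} (a c : Fin n) (x : Fin n → ℝ) :
    pdb a (fun y => y c) x = if c = a then 1 else 0 := by
  unfold pdb
  have h : fderiv ℝ (fun y : Fin n → ℝ => y c) x = ContinuousLinearMap.proj c :=
    (ContinuousLinearMap.proj c : (Fin n → ℝ) →L[ℝ] ℝ).fderiv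
  rw [h]
  simp [Pi.single_apply]

lemma pdb_sum {n : ℕ} (a : Fin n) (f : Fin n → (Fin n → ℝ) → ℝ) (x : Fin n → ℝ)
    (hf : ∀ i, DifferentiableAt ℝ (f i) x) :
    pdb a (fun y => ∑ i, f i y) x = ∑ i, pdb a (f i) x := by
  unfold pdb; rw [fderiv_fun_sum fun i _ => hf i]; simp

lemma pdb_const_mul {n : ℕ} (a : Fin n) (c : ℝ) (f : (Fin n → ℝ) → ℝ) (x : Fin n → ℝ)
    (hf : DifferentiableAt ℝ f x) :
    pdb a (fun y => c * f y) x = c * pdb a f x := by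
  unfold pdb; rw [fderiv_const_mul hf]; rfl

lemma pdb_comp {n : ℕ} (a : Fin n) (f : (Fin n → ℝ) → ℝ) (g : (Fin n → ℝ) → (Fin n → ℝ))
    (x : Fin n → ℝ) (hf : DifferentiableAt ℝ f (g x)) (hg : DifferentiableAt ℝ g x) :
    pdb a (fun y => f (g y)) x = ∑ c, pdb a (fun y => g y c) x * pdb c f (g x) := by
  unfold pdb
  have hcomp : fderiv ℝ (fun y => f (g y)) x = (fderiv ℝ f (g x)).comp (fderiv ℝ g x) :=
    fderiv_comp (x := x) hf hg
  rw [hcomp]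
  have happ : ((fderiv ℝ f (g x)).comp (fderiv ℝ g x)) (Pi.single a 1)
      = fderiv ℝ f (g x) (fderiv ℝ g x (Pi.single a 1)) := rfl
  rw [happ, clm_apply_eq_sum]
  have hgp : ∀ i, DifferentiableAt ℝ (fun y => g y i) x := fun i =>
    (ContinuousLinearMap.proj i : (Fin n → ℝ) →L[ℝ] ℝ).differentiableAt.comp x hg
  have hw : ∀ c, fderiv ℝ g x (Pi.single a 1) c
      = fderiv ℝ (fun y => g y c) x (Pi.single a 1) := by
    intro c
    have := fderiv_pi hgp
    rw [show g = (fun y i => g y i) from rfl, this]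
    rfl
  exact Finset.sum_congr rfl fun c _ => by rw [hw c]


lemma delta_sum {n : ℕ} (a : Fin n) (f : Fin n → ℝ) :
    ∑ c, (if c = a then (1:ℝ) else 0) * f c = f a := by simp

lemma sum2_congr {n : ℕ} (f g : Fin n → Fin n → ℝ) (h : ∀ i j, f i j = g i j) :
    ∑ i, ∑ j, f i j = ∑ i, ∑ j, g i j :=
  Finset.sum_congr rfl fun i _ => Finset.sum_congr rfl fun j _ => h i j

lemma sum3_swap {n : ℕ} (F : Fin n → Fin n → Fin n → ℝ) :
    ∑ i, ∑ j, ∑ c, F i j c = ∑ c, ∑ i, ∑ j, F i j c := by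
  rw [show (∑ i, ∑ j, ∑ c, F i j c) = ∑ i, ∑ c, ∑ j, F i j c from
    Finset.sum_congr rfl fun i _ => Finset.sum_comm]
  exact Finset.sum_comm

lemma sum4_swap {n : ℕ} (F : Fin n → Fin n → Fin n → Fin n → ℝ) :
    ∑ i, ∑ j, ∑ c, ∑ d, F i j c d = ∑ c, ∑ d, ∑ i, ∑ j, F i j c d := by
  rw [sum3_swap (fun i j c => ∑ d, F i j c d)]
  exact Finset.sum_congr rfl fun c _ => sum3_swap (fun i j d => F i j c d)

/-- `M Θ P p c = Σ_i Θ^{ci} ∂_p P_i` -/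
noncomputable def Mm {n : ℕ} (Θ : Matrix (Fin n) (Fin n) ℝ) (P : Fin n → Fin n → ℝ)
    (p c : Fin n) : ℝ := ∑ i, Θ c i * P p i

/-- `s2 Θ Q c d = Σ_{ij} Θ^{ij} Q_{ci} Q_{dj}` -/
noncomputable def s2 {n : ℕ} (Θ : Matrix (Fin n) (Fin n) ℝ) (Q : Fin n → Fin n → ℝ)
    (c d : Fin n) : ℝ := ∑ i, ∑ j, Θ i j * Q c i * Q d j

lemma key_alg {n : ℕ} (Θ : Matrix (Fin n) (Fin n) ℝ) (hΘ : ∀ i j, Θ i j = -Θ j i)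
    (P Q J : Fin n → Fin n → ℝ)
    (hJ : ∀ a c, J a c = (if c = a then (1:ℝ) else 0) + Mm Θ P a c)
    (hLag : ∀ a b, P a b - P b a + ∑ i, ∑ j, Θ i j * P a i * P b j = 0)
    (a b : Fin n) :
    (P a b + ∑ c, J a c * Q c b) - (P b a + ∑ c, J b c * Q c a)
      + ∑ i, ∑ j, Θ i j * (P a i + ∑ c, J a c * Q c i) * (P b j + ∑ c, J b c * Q c j)
    = ∑ c, ∑ d, J a c * J b d *
        (Q c d - Q d c + ∑ i, ∑ j, Θ i j * Q c i * Q d j) := by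
  set M := Mm Θ P with hMdef
  have hM : ∀ p c, M p c = ∑ i, Θ c i * P p i := fun p c => rfl
  have hMneg : ∀ p j, ∑ i, Θ i j * P p i = -(M p j) := by
    intro p j
    rw [hM]
    rw [show (∑ i, Θ i j * P p i) = ∑ i, -(Θ j i * P p i) from
      Finset.sum_congr rfl fun i _ => by rw [hΘ i j]; ring]
    simp
  have hJQ : ∀ p q, ∑ c, J p c * Q c q = Q p q + ∑ c, M p c * Q c q := by
    intro p q
    simp only [hJ, add_mul, Finset.sum_add_distrib]
    rw [delta_sum p (fun c => Q c q)]
  -- the nine-term expansion of the big double sum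
  have hW : (∑ i, ∑ j, Θ i j * (P a i + ∑ c, J a c * Q c i) * (P b j + ∑ c, J b c * Q c j))
      = (∑ i, ∑ j, Θ i j * P a i * P b j)
      + (∑ i, ∑ j, Θ i j * P a i * Q b j)
      + (∑ i, ∑ j, Θ i j * P a i * (∑ c, M b c * Q c j))
      + (∑ i, ∑ j, Θ i j * Q a i * P b j)
      + (∑ i, ∑ j, Θ i j * Q a i * Q b j)
      + (∑ i, ∑ j, Θ i j * Q a i * (∑ c, M b c * Q c j))
      + (∑ i, ∑ j, Θ i j * (∑ c, M a c * Q c i) * P b j)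
      + (∑ i, ∑ j, Θ i j * (∑ c, M a c * Q c i) * Q b j)
      + (∑ i, ∑ j, Θ i j * (∑ c, M a c * Q c i) * (∑ c, M b c * Q c j)) := by
    rw [sum2_congr _ (fun i j =>
        Θ i j * P a i * P b j + Θ i j * P a i * Q b j
      + Θ i j * P a i * (∑ c, M b c * Q c j)
      + Θ i j * Q a i * P b j + Θ i j * Q a i * Q b j
      + Θ i j * Q a i * (∑ c, M b c * Q c j)
      + Θ i j * (∑ c, M a c * Q c i) * P b j
      + Θ i j * (∑ c, M a c * Q c i) * Q b j
      + Θ i j * (∑ c, M a c * Q c i) * (∑ c, M b c * Q c j))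
      (fun i j => by rw [hJQ a i, hJQ b j]; ring)]
    simp only [Finset.sum_add_distrib]
  have hE1 : (∑ i, ∑ j, Θ i j * P a i * P b j) = P b a - P a b := by
    have h := hLag a b; linarith
  have hE2 : (∑ i, ∑ j, Θ i j * P a i * Q b j) = -(∑ c, M a c * Q b c) := by
    rw [Finset.sum_comm]
    rw [show (∑ j, ∑ i, Θ i j * P a i * Q b j) = ∑ j, -(M a j * Q b j) from
      Finset.sum_congr rfl fun j _ => by rw [← Finset.sum_mul, hMneg a j]; ring]
    simp
  have hE3 : (∑ i, ∑ j, Θ i j * P a i * (∑ c, M b c * Q c j))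
      = -(∑ c, ∑ d, M a c * (M b d * Q d c)) := by
    rw [Finset.sum_comm]
    rw [show (∑ j, ∑ i, Θ i j * P a i * (∑ c, M b c * Q c j))
        = ∑ j, -(∑ c, M a j * (M b c * Q c j)) from
      Finset.sum_congr rfl fun j _ => by
        rw [← Finset.sum_mul, hMneg a j, Finset.mul_sum]
        rw [show (∑ c, M a j * (M b c * Q c j)) = ∑ c, (M a j) * (M b c * Q c j) from rfl]
        simp [Finset.mul_sum]]
    simp
  have hE4 : (∑ i, ∑ j, Θ i j * Q a i * P b j) = ∑ c, M b c * Q a c := by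
    refine Finset.sum_congr rfl fun i _ => ?_
    rw [hM, Finset.sum_mul]
    exact Finset.sum_congr rfl fun j _ => by ring
  have hE6 : (∑ i, ∑ j, Θ i j * Q a i * (∑ c, M b c * Q c j))
      = ∑ d, M b d * s2 Θ Q a d := by
    rw [sum2_congr _ (fun i j => ∑ c, M b c * (Θ i j * Q a i * Q c j))
      (fun i j => by rw [Finset.mul_sum]; exact Finset.sum_congr rfl fun c _ => by ring)]
    rw [sum3_swap (fun i j c => M b c * (Θ i j * Q a i * Q c j))]
    refine Finset.sum_congr rfl fun c _ => ?_
    simp only [s2, Finset.mul_sum]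
  have hE7 : (∑ i, ∑ j, Θ i j * (∑ c, M a c * Q c i) * P b j)
      = ∑ c, ∑ d, M a c * (M b d * Q c d) := by
    rw [show (∑ i, ∑ j, Θ i j * (∑ c, M a c * Q c i) * P b j)
        = ∑ i, ∑ c, M a c * (M b i * Q c i) from
      Finset.sum_congr rfl fun i _ => by
        rw [show (∑ j, Θ i j * (∑ c, M a c * Q c i) * P b j)
            = (∑ c, M a c * Q c i) * (∑ j, Θ i j * P b j) from by
          rw [Finset.mul_sum]; exact Finset.sum_congr rfl fun j _ => by ring]
        rw [← hM b i, Finset.sum_mul]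
        exact Finset.sum_congr rfl fun c _ => by ring]
    exact Finset.sum_comm
  have hE8 : (∑ i, ∑ j, Θ i j * (∑ c, M a c * Q c i) * Q b j)
      = ∑ c, M a c * s2 Θ Q c b := by
    rw [sum2_congr _ (fun i j => ∑ c, M a c * (Θ i j * Q c i * Q b j))
      (fun i j => by
        rw [Finset.mul_sum, Finset.sum_mul]
        exact Finset.sum_congr rfl fun c _ => by ring)]
    rw [sum3_swap (fun i j c => M a c * (Θ i j * Q c i * Q b j))]
    refine Finset.sum_congr rfl fun c _ => ?_
    simp only [s2, Finset.mul_sum]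
  have hE9 : (∑ i, ∑ j, Θ i j * (∑ c, M a c * Q c i) * (∑ c, M b c * Q c j))
      = ∑ c, ∑ d, M a c * (M b d * s2 Θ Q c d) := by
    rw [sum2_congr _
      (fun i j => ∑ c, ∑ d, M a c * (M b d * (Θ i j * Q c i * Q d j)))
      (fun i j => by
        rw [mul_assoc, Finset.sum_mul_sum, Finset.mul_sum]
        refine Finset.sum_congr rfl fun c _ => ?_
        rw [Finset.mul_sum]
        exact Finset.sum_congr rfl fun d _ => by ring)]
    rw [sum4_swap (fun i j c d => M a c * (M b d * (Θ i j * Q c i * Q d j)))]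
    refine Finset.sum_congr rfl fun c _ => Finset.sum_congr rfl fun d _ => ?_
    simp only [s2, Finset.mul_sum]
  -- right-hand side expansion
  have hpt : ∀ c d, J a c * J b d * (Q c d - Q d c + ∑ i, ∑ j, Θ i j * Q c i * Q d j)
      = (if d = b then (1:ℝ) else 0) * ((if c = a then (1:ℝ) else 0) * (Q c d - Q d c + s2 Θ Q c d))
      + (if c = a then (1:ℝ) else 0) * (M b d * (Q c d - Q d c + s2 Θ Q c d))
      + (if d = b then (1:ℝ) else 0) * (M a c * (Q c d - Q d c + s2 Θ Q c d))
      + M a c * (M b d * (Q c d - Q d c + s2 Θ Q c d)) := by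
    intro c d
    rw [hJ a c, hJ b d, show (∑ i, ∑ j, Θ i j * Q c i * Q d j) = s2 Θ Q c d from rfl]
    ring
  have hRHS : (∑ c, ∑ d, J a c * J b d *
        (Q c d - Q d c + ∑ i, ∑ j, Θ i j * Q c i * Q d j))
      = (Q a b - Q b a + s2 Θ Q a b)
      + (∑ d, M b d * (Q a d - Q d a + s2 Θ Q a d))
      + (∑ c, M a c * (Q c b - Q b c + s2 Θ Q c b))
      + (∑ c, ∑ d, M a c * (M b d * (Q c d - Q d c + s2 Θ Q c d))) := by
    rw [sum2_congr _ _ hpt]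
    simp only [Finset.sum_add_distrib]
    congr 1
    · congr 1
      · congr 1
        · rw [show (∑ c, ∑ d, (if d = b then (1:ℝ) else 0) *
              ((if c = a then (1:ℝ) else 0) * (Q c d - Q d c + s2 Θ Q c d)))
              = ∑ c, (if c = a then (1:ℝ) else 0) * (Q c b - Q b c + s2 Θ Q c b) from
            Finset.sum_congr rfl fun c _ =>
              delta_sum b (fun d => (if c = a then (1:ℝ) else 0) * (Q c d - Q d c + s2 Θ Q c d))]
          exact delta_sum a (fun c => Q c b - Q b c + s2 Θ Q c b)
        · rw [show (∑ c, ∑ d, (if c = a then (1:ℝ) else 0) *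
              (M b d * (Q c d - Q d c + s2 Θ Q c d)))
              = ∑ c, (if c = a then (1:ℝ) else 0) *
                  (∑ d, M b d * (Q c d - Q d c + s2 Θ Q c d)) from
            Finset.sum_congr rfl fun c _ => (Finset.mul_sum _ _ _).symm]
          exact delta_sum a (fun c => ∑ d, M b d * (Q c d - Q d c + s2 Θ Q c d))
      · exact Finset.sum_congr rfl fun c _ =>
          delta_sum b (fun d => M a c * (Q c d - Q d c + s2 Θ Q c d))
  -- expand the three remaining sums on the RHS
  have hT2 : (∑ d, M b d * (Q a d - Q d a + s2 Θ Q a d))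
      = (∑ c, M b c * Q a c) - (∑ c, M b c * Q c a) + ∑ d, M b d * s2 Θ Q a d := by
    simp only [mul_sub, mul_add, Finset.sum_add_distrib, Finset.sum_sub_distrib]
  have hT3 : (∑ c, M a c * (Q c b - Q b c + s2 Θ Q c b))
      = (∑ c, M a c * Q c b) - (∑ c, M a c * Q b c) + ∑ c, M a c * s2 Θ Q c b := by
    simp only [mul_sub, mul_add, Finset.sum_add_distrib, Finset.sum_sub_distrib]
  have hT4 : (∑ c, ∑ d, M a c * (M b d * (Q c d - Q d c + s2 Θ Q c d)))
      = (∑ c, ∑ d, M a c * (M b d * Q c d)) - (∑ c, ∑ d, M a c * (M b d * Q d c))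
        + ∑ c, ∑ d, M a c * (M b d * s2 Θ Q c d) := by
    simp only [mul_sub, mul_add, Finset.sum_add_distrib, Finset.sum_sub_distrib]
  have hs2ab : (∑ i, ∑ j, Θ i j * Q a i * Q b j) = s2 Θ Q a b := rfl
  rw [hJQ a b, hJQ b a, hW, hE1, hE2, hE3, hE4, hs2ab, hE6, hE7, hE8, hE9,
    hRHS, hT2, hT3, hT4]
  ring

theorem stmt_17 {n : ℕ} (Θ : Matrix (Fin n) (Fin n) ℝ)
    (hΘ : ∀ i j, Θ i j = -Θ j i)
    (A Λ : (Fin n → ℝ) → (Fin n → ℝ))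
    (hA : ContDiff ℝ (⊤ : ℕ∞) A) (hΛ : ContDiff ℝ (⊤ : ℕ∞) Λ)
    (hLag : ∀ a b x, Fs Θ Λ a b x = 0)
    (l : (Fin n → ℝ) → (Fin n → ℝ)) (hl : ∀ x, l x = x + Θ.mulVec (Λ x))
    (A' : (Fin n → ℝ) → (Fin n → ℝ)) (hA' : ∀ x, A' x = Λ x + A (l x)) :
    ∀ (a b : Fin n) (x : Fin n → ℝ),
      Fs Θ A' a b x =
        ∑ c, ∑ d, pdb a (fun x => l x c) x * pdb b (fun x => l x d) x *
          Fs Θ A c d (l x) := by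
  intro a b x
  have hAd : Differentiable ℝ A := hA.differentiable (by simp)
  have hΛd : Differentiable ℝ Λ := hΛ.differentiable (by simp)
  have hAc : ∀ i, Differentiable ℝ (fun y => A y i) := fun i =>
    (ContinuousLinearMap.proj i : (Fin n → ℝ) →L[ℝ] ℝ).differentiable.comp hAd
  have hΛc : ∀ i, Differentiable ℝ (fun y => Λ y i) := fun i =>
    (ContinuousLinearMap.proj i : (Fin n → ℝ) →L[ℝ] ℝ).differentiable.comp hΛd
  -- components of l
  have hlc : ∀ c y, l y c = y c + ∑ i, Θ c i * Λ y i := by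
    intro c y
    rw [hl y]
    simp [Matrix.mulVec, dotProduct]
  have hlcd : ∀ c, Differentiable ℝ (fun y => l y c) := by
    intro c
    rw [show (fun y => l y c) = fun y => y c + ∑ i, Θ c i * Λ y i from funext (hlc c)]
    exact ((ContinuousLinearMap.proj c : (Fin n → ℝ) →L[ℝ] ℝ).differentiable).add
      (Differentiable.fun_sum fun i _ => (hΛc i).const_mul (Θ c i))
  have hld : Differentiable ℝ l := differentiable_pi.2 hlcd
  -- the Jacobian of l
  have hJval : ∀ (p c : Fin n), pdb p (fun y => l y c) x
      = (if c = p then (1:ℝ) else 0) + ∑ i, Θ c i * pdb p (fun y => Λ y i) x := by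
    intro p c
    rw [show (fun y => l y c) = fun y => y c + ∑ i, Θ c i * Λ y i from funext (hlc c)]
    rw [pdb_add p (fun y => y c) (fun y => ∑ i, Θ c i * Λ y i) x
      ((ContinuousLinearMap.proj c : (Fin n → ℝ) →L[ℝ] ℝ).differentiableAt)
      (DifferentiableAt.fun_sum fun i _ => ((hΛc i) x).const_mul (Θ c i))]
    rw [pdb_coord, pdb_sum p _ x (fun i => ((hΛc i) x).const_mul (Θ c i))]
    congr 1
    exact Finset.sum_congr rfl fun i _ => pdb_const_mul p (Θ c i) _ x ((hΛc i) x)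
  -- derivative of the components of A'
  have hA'val : ∀ (p i : Fin n), pdb p (fun y => A' y i) x
      = pdb p (fun y => Λ y i) x
        + ∑ c, pdb p (fun y => l y c) x * pdb c (fun y => A y i) (l x) := by
    intro p i
    rw [show (fun y => A' y i) = fun y => Λ y i + A (l y) i from
      funext fun y => by rw [hA' y]; rfl]
    rw [pdb_add p (fun y => Λ y i) (fun y => A (l y) i) x ((hΛc i) x)
      (((hAc i) (l x)).comp x (hld x))]
    congr 1
    exact pdb_comp p (fun z => A z i) l x ((hAc i) (l x)) (hld x)
  -- Lagrangian condition, unfolded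
  have hLag' : ∀ p q, pdb p (fun y => Λ y q) x - pdb q (fun y => Λ y p) x
      + ∑ i, ∑ j, Θ i j * pdb p (fun y => Λ y i) x * pdb q (fun y => Λ y j) x = 0 := by
    intro p q
    have h := hLag p q x
    simpa [Fs] using h
  -- now reduce to the purely algebraic lemma
  simp only [Fs]
  rw [hA'val a b, hA'val b a,
    sum2_congr _ (fun i j => Θ i j
      * (pdb a (fun y => Λ y i) x
          + ∑ c, pdb a (fun y => l y c) x * pdb c (fun y => A y i) (l x))
      * (pdb b (fun y => Λ y j) x
          + ∑ c, pdb b (fun y => l y c) x * pdb c (fun y => A y j) (l x)))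
      (fun i j => by rw [hA'val a i, hA'val b j])]
  exact key_alg Θ hΘ
    (fun p i => pdb p (fun y => Λ y i) x)
    (fun c i => pdb c (fun y => A y i) (l x))
    (fun p c => pdb p (fun y => l y c) x)
    (fun p c => hJval p c) hLag' a b
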